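/- arXiv:1510.02935 — 2 statements merged into one kernel-verified Lean document; each statement's English description precedes it below -/
import Mathlib

section
/- Let p and q be finite binary strings of the same length n, let r : ℕ → Bool, and let k_0 < k_1 < ... < k_{M-1} be the increasing enumeration of {N < n : p(N) = false}. Let s be the binary string of length n defined by s(N) = true iff (p(N) = true and q(N) = true) or (N = k_j for some j < M with r(j) = true). Then for every finite binary string t that extends s, there exist finite binary strings p̄ and q̄, both of length lh(t), with p̄ extending p and q̄ extending q, such that for every N < lh(t): t(N) = true iff (p̄(N) = true and q̄(N) = true) or (N = k̄_j for some j < M̄ with r(j) = true), where k̄_0 < ... < k̄_{M̄-1} is the increasing enumeration of {N < lh(p̄) : p̄(N) = false}. -/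
/-- The increasing enumeration of the positions `N < p.length` where `p N = false`,
as a (sorted) list of natural numbers. -/
def falseIdx (p : List Bool) : List ℕ :=
  (List.range p.length).filter (fun N => p.getD N true = false)

/-- `codePred r p q N` holds iff `p N = true` and `q N = true`, or `N = k_j` for some
`j < M` with `r j = true`, where `k_0 < ... < k_{M-1}` enumerates `{N < p.length : p N = false}`. -/
def codePred (r : ℕ → Bool) (p q : List Bool) (N : ℕ) : Prop :=
  (p.getD N false = true ∧ q.getD N false = true) ∨
    ∃ j < (falseIdx p).length, N = (falseIdx p).getD j 0 ∧ r j = true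

instance (r : ℕ → Bool) (p q : List Bool) (N : ℕ) : Decidable (codePred r p q N) := by
  unfold codePred; infer_instance

/-- The binary string `s` of length `p.length` with `s N = true` iff `codePred r p q N`. -/
def code (r : ℕ → Bool) (p q : List Bool) : List Bool :=
  (List.range p.length).map (fun N => decide (codePred r p q N))

lemma falseIdx_append_true (p : List Bool) (m : ℕ) :
    falseIdx (p ++ List.replicate m true) = falseIdx p := by
  unfold falseIdx
  rw [List.length_append, List.length_replicate, List.range_add, List.filter_append]
  have h1 : ∀ N ∈ List.range p.length,
      decide ((p ++ List.replicate m true).getD N true = false) = decide (p.getD N true = false) := by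
    intro N hN
    rw [List.mem_range] at hN
    rw [List.getD_append _ _ _ _ hN]
  have h2 : (List.filter (fun N => decide ((p ++ List.replicate m true).getD N true = false))
      ((List.range m).map (p.length + ·))) = [] := by
    rw [List.filter_eq_nil_iff]
    intro N hN
    simp only [List.mem_map, List.mem_range] at hN
    obtain ⟨i, hi, rfl⟩ := hN
    rw [List.getD_append_right _ _ _ _ (Nat.le_add_right _ _)]
    simp [Nat.add_sub_cancel_left, List.getD_eq_getElem?_getD, hi]
  rw [h2, List.append_nil, List.filter_congr h1]

lemma falseIdx_lt (p : List Bool) (j : ℕ) (hj : j < (falseIdx p).length) :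
    (falseIdx p).getD j 0 < p.length := by
  rw [List.getD_eq_getElem _ _ hj]
  have := (falseIdx p).getElem_mem hj
  unfold falseIdx at this
  have := List.mem_of_mem_filter this
  rwa [List.mem_range] at this

/-- Claim 4.4: for every finite binary string `t` extending `s = code r p q`, there are
extensions `p̄` of `p` and `q̄` of `q`, both of length `t.length`, such that for every
`N < t.length`, `t N = true` iff `p̄ N = q̄ N = true` or `N = k̄_j` for some `j < M̄`
with `r j = true`, where `k̄` enumerates the false-positions of `p̄`. -/
theorem claim_4_4 (r : ℕ → Bool) (p q : List Bool) (hpq : p.length = q.length)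
    (t : List Bool) (ht : code r p q <+: t) :
    ∃ pbar qbar : List Bool,
      pbar.length = t.length ∧ qbar.length = t.length ∧
      p <+: pbar ∧ q <+: qbar ∧
      ∀ N < t.length, (t.getD N false = true ↔ codePred r pbar qbar N) := by
  obtain ⟨u, rfl⟩ := ht
  have hlen : (code r p q).length = p.length := by simp [code]
  refine ⟨p ++ List.replicate u.length true, q ++ u, ?_, ?_,
    List.prefix_append _ _, List.prefix_append _ _, ?_⟩
  · simp [hlen]
  · simp [hlen, hpq]
  · intro N hN
    simp only [List.length_append, hlen] at hN
    unfold codePred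
    rw [falseIdx_append_true]
    rcases lt_or_ge N p.length with h | h
    · -- N < p.length
      have ht : (code r p q ++ u).getD N false = decide (codePred r p q N) := by
        rw [List.getD_append _ _ _ _ (hlen ▸ h), code, List.getD_eq_getElem _ _ (by simpa)]
        simp
      rw [ht, List.getD_append _ _ _ _ h, List.getD_append _ _ _ _ (hpq ▸ h)]
      simp only [decide_eq_true_eq]
      rfl
    · -- N ≥ p.length
      have hNu : N - p.length < u.length := by omega
      have ht : (code r p q ++ u).getD N false = u.getD (N - p.length) false := by
        rw [List.getD_append_right _ _ _ _ (hlen ▸ h), hlen]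
      have hp : (p ++ List.replicate u.length true).getD N false = true := by
        rw [List.getD_append_right _ _ _ _ h]
        simp [List.getD_eq_getElem?_getD, hNu]
      have hq : (q ++ u).getD N false = u.getD (N - p.length) false := by
        rw [List.getD_append_right _ _ _ _ (hpq ▸ h), hpq]
      rw [ht, hp, hq]
      constructor
      · intro h'; exact Or.inl ⟨rfl, h'⟩
      · rintro (⟨_, h'⟩ | ⟨j, hj, rfl, _⟩)
        · exact h'
        · exact absurd (falseIdx_lt p j hj) (by omega)
end

section
/- Fix r : ℕ → Bool. For finite binary strings p, q of the same length n, define code(p,q) to be the binary string s of length n with s(N) = true iff (p(N) = true and q(N) = true) or (N = k_j for some j < M with r(j) = true), where k_0 < ... < k_{M-1} is the increasing enumeration of {N < n : p(N) = false}. Let D be any dense set of finite binary strings, i.e. every finite binary string has an extension in D. Then for every pair (p,q) of finite binary strings of the same length there exists a pair (p̄,q̄) of finite binary strings of the same length, with p̄ extending p and q̄ extending q, such that code(p̄,q̄) extends some element of D. -/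
/-!
Take `d ∈ D` extending `code r p q`, say `d = code r p q ++ s`. Padding `p` with
`s.length` copies of `true` adds no new zeros to `p`, so the enumeration of its zeros, and
hence the code below `p.length`, is unchanged; above `p.length` the code of
`(p ++ true…true, q ++ s)` is just `s`. So `code r (p ++ true…true) (q ++ s) = d`.
-/

lemma lt_length_of_mem_falseIdx {p : List Bool} {N : ℕ} (h : N ∈ falseIdx p) :
    N < p.length :=
  List.mem_range.mp (List.mem_filter.mp h).1

lemma falseIdx_append_replicate_true (p : List Bool) (k : ℕ) :
    falseIdx (p ++ List.replicate k true) = falseIdx p := by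
  unfold falseIdx
  rw [List.length_append, List.length_replicate, List.range_add, List.filter_append]
  have below : ((List.range p.length).filter
      fun N => (p ++ List.replicate k true).getD N true = false) =
      (List.range p.length).filter fun N => p.getD N true = false :=
    List.filter_congr fun N hN => by rw [List.getD_append p _ true N (List.mem_range.mp hN)]
  have above : ((List.range k).map (p.length + ·)).filter
      (fun N => (p ++ List.replicate k true).getD N true = false) = [] := by
    rw [List.filter_eq_nil_iff]
    intro _ hN
    obtain ⟨i, hi, rfl⟩ := List.mem_map.mp hN
    simp [List.mem_range.mp hi]
  rw [below, above, List.append_nil]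

lemma length_code (r : ℕ → Bool) (p q : List Bool) : (code r p q).length = p.length := by
  simp [code]

lemma getElem_code (r : ℕ → Bool) (p q : List Bool) (n : ℕ) (hn : n < (code r p q).length) :
    (code r p q)[n] = decide (codePred r p q n) := by
  simp [code]

section Append

variable {r : ℕ → Bool} {p q : List Bool} {n : ℕ}

lemma codePred_append_replicate_true_of_lt (hpq : p.length = q.length) (k : ℕ)
    (s : List Bool) (hn : n < p.length) :
    codePred r (p ++ List.replicate k true) (q ++ s) n ↔ codePred r p q n := by
  unfold codePred
  rw [falseIdx_append_replicate_true, List.getD_append p _ false n hn,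
    List.getD_append q _ false n (hpq ▸ hn)]

lemma codePred_append_replicate_true_of_le (hpq : p.length = q.length) (s : List Bool)
    (hn : p.length ≤ n) (hns : n < p.length + s.length) :
    codePred r (p ++ List.replicate s.length true) (q ++ s) n ↔ s[n - p.length] = true := by
  have no_zero : ¬ ∃ j < (falseIdx p).length, n = (falseIdx p).getD j 0 ∧ r j = true := by
    rintro ⟨j, hj, rfl, -⟩
    rw [List.getD_eq_getElem _ _ hj] at hn
    exact absurd (lt_length_of_mem_falseIdx (List.getElem_mem hj)) (not_lt.mpr hn)
  unfold codePred
  rw [falseIdx_append_replicate_true, or_iff_left no_zero,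
    List.getD_append_right p _ false n hn, List.getD_append_right q _ false n (hpq ▸ hn), ← hpq]
  simp [show n - p.length < s.length by omega]

lemma code_append_replicate_true (hpq : p.length = q.length) (s : List Bool) :
    code r (p ++ List.replicate s.length true) (q ++ s) = code r p q ++ s := by
  refine List.ext_getElem (by simp [length_code]) fun n hn _ => ?_
  have hns : n < p.length + s.length := by simpa [length_code] using hn
  rw [getElem_code]
  rcases lt_or_ge n p.length with hnp | hnp
  · rw [List.getElem_append_left (by rwa [length_code]), getElem_code]
    exact decide_eq_decide.mpr (codePred_append_replicate_true_of_lt hpq _ s hnp)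
  · rw [List.getElem_append_right (by rwa [length_code])]
    simp only [codePred_append_replicate_true_of_le hpq s hnp hns, length_code,
      Bool.decide_eq_true]

end Append

/-- The density statement (*) of Theorem 4.3: if `D` is a dense set of finite binary
strings (every string has an extension in `D`), then every pair `(p, q)` of strings of
the same length has an extension `(p̄, q̄)`, of a common length, such that
`code r p̄ q̄` extends some element of `D`. -/
theorem density_of_code (r : ℕ → Bool) (D : Set (List Bool))
    (hD : ∀ s : List Bool, ∃ t ∈ D, s <+: t)
    (p q : List Bool) (hpq : p.length = q.length) :
    ∃ pbar qbar : List Bool, pbar.length = qbar.length ∧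
      p <+: pbar ∧ q <+: qbar ∧ ∃ d ∈ D, d <+: code r pbar qbar := by
  obtain ⟨_, hdD, s, rfl⟩ := hD (code r p q)
  refine ⟨p ++ List.replicate s.length true, q ++ s, by simp [hpq], List.prefix_append _ _,
    List.prefix_append _ _, _, hdD, ?_⟩
  rw [code_append_replicate_true hpq]
end
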